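/- Let n = 2m+1 be odd with m ≥ 2, k a field of characteristic 2, and L = N_1(n,k). Then the derived subalgebra [L,L] is spanned by {e_α : α ≠ α̂}, where α̂ = α_1 + ⋯ + α_n is the all-ones vector; in particular [L,L] has dimension 2^n − 2 and L is not perfect. -/

import Mathlib

/-- Parity `|α|` of the coordinate sum of `α ∈ GF(2)^n`. -/
def par {n : ℕ} (α : Fin n → ZMod 2) : ZMod 2 := ∑ i, α i

/-- Standard inner product `(α, β)` on `GF(2)^n`. -/
def dotp {n : ℕ} (α β : Fin n → ZMod 2) : ZMod 2 := ∑ i, α i * β i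

/-- Structure constant of `N₁(n,k)` on `e_{α+β}`: equal to `1` if `|α| = |β| = 1`,
and to `(α,β)` if `|α| = 0` or `|β| = 0`. -/
noncomputable def cN1 (k : Type*) [Field k] {n : ℕ} (α β : Fin n → ZMod 2) : k :=
  if par α = 1 ∧ par β = 1 then 1 else if dotp α β = 1 then 1 else 0

/-- The bracket of `N₁(n,k)`, defined on the free `k`-module with basis
`{e_α : α ∈ GF(2)^n \ {0}}` (realized as finitely supported functions), extended
bilinearly from `⁅e_α, e_β⁆ = cN1 α β • e_{α+β}` (and `0` when `α + β = 0`). -/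
noncomputable def brN1 {k : Type*} [Field k] {n : ℕ}
    (f g : {v : Fin n → ZMod 2 // v ≠ 0} →₀ k) :
    {v : Fin n → ZMod 2 // v ≠ 0} →₀ k :=
  f.sum fun α a => g.sum fun β b =>
    if h : α.1 + β.1 ≠ 0 then
      Finsupp.single ⟨α.1 + β.1, h⟩ (a * b * cN1 k α.1 β.1)
    else 0

/-- The basis vector `e_α` of `N₁(n,k)`. -/
noncomputable def eN1 (k : Type*) [Field k] {n : ℕ} (α : Fin n → ZMod 2) (h : α ≠ 0) :
    {v : Fin n → ZMod 2 // v ≠ 0} →₀ k :=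
  Finsupp.single ⟨α, h⟩ 1

/-! Write `α̂` for the all-ones vector. If `γ ∉ {0, α̂}`, pick `i, j` with `γ i = 1`, `γ j = 0`;
then `α = εᵢ + εⱼ` and `β = γ + α` satisfy `(α, β) = 1`, which forces the structure constant to be
`1`, so `e_γ = [e_α, e_β]`. Conversely, if `α + β = α̂` then `|α| + |β| = n = 1`, so `α, β` are not
both odd, and `(α, β) = ∑ αᵢ (1 + αᵢ) = 0`; hence no bracket has an `e_α̂`-component. So `[L, L]`
consists exactly of the vectors supported away from `α̂`. -/

section Vectors

variable {n : ℕ}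

lemma par_add (α β : Fin n → ZMod 2) : par (α + β) = par α + par β := by
  simp [par, Finset.sum_add_distrib]

lemma par_ones_of_odd (hn : Odd n) : par (fun _ : Fin n => (1 : ZMod 2)) = 1 := by
  simpa [par] using ZMod.natCast_eq_one_iff_odd.2 hn

lemma dotp_add_left (α β γ : Fin n → ZMod 2) : dotp (α + β) γ = dotp α γ + dotp β γ := by
  simp [dotp, add_mul, Finset.sum_add_distrib]

lemma dotp_single_left (i : Fin n) (β : Fin n → ZMod 2) : dotp (Pi.single i 1) β = β i := by
  simp [dotp, Pi.single_apply]

lemma dotp_eq_zero_of_add_eq_ones {α β : Fin n → ZMod 2} (h : α + β = fun _ => 1) :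
    dotp α β = 0 := by
  have key : ∀ x y : ZMod 2, x + y = 1 → x * y = 0 := by decide
  exact Finset.sum_eq_zero fun i _ => key _ _ (congrFun h i)

lemma ne_zero_of_par_eq_one {α : Fin n → ZMod 2} (h : par α = 1) : α ≠ 0 := by
  rintro rfl
  simp [par] at h

lemma ne_zero_of_dotp_eq_one {α β : Fin n → ZMod 2} (h : dotp α β = 1) : α ≠ 0 ∧ β ≠ 0 := by
  constructor <;> rintro rfl <;> simp [dotp] at h

lemma ones_ne_zero_of_odd (hn : Odd n) : (fun _ : Fin n => (1 : ZMod 2)) ≠ 0 :=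
  ne_zero_of_par_eq_one (par_ones_of_odd hn)

lemma exists_add_eq_dotp_eq_one {γ : Fin n → ZMod 2} (h0 : γ ≠ 0) (h1 : γ ≠ fun _ => 1) :
    ∃ α β, α + β = γ ∧ dotp α β = 1 := by
  obtain ⟨i, hi⟩ := Function.ne_iff.1 h0
  obtain ⟨j, hj⟩ := Function.ne_iff.1 h1
  have hi : γ i = 1 := Fin.eq_one_of_ne_zero _ hi
  have hj : γ j = 0 := by_contra fun h => hj (Fin.eq_one_of_ne_zero _ h)
  have hij : i ≠ j := by rintro rfl; simp [hi] at hj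
  refine ⟨Pi.single i 1 + Pi.single j 1, γ - (Pi.single i 1 + Pi.single j 1), add_sub_cancel _ _, ?_⟩
  simp [dotp_add_left, dotp_single_left, hi, hj, hij, hij.symm]

end Vectors

section Bracket

variable {k : Type*} [Field k] {n : ℕ}

lemma cN1_eq_one_of_dotp_eq_one {α β : Fin n → ZMod 2} (h : dotp α β = 1) : cN1 k α β = 1 := by
  simp [cN1, h]

lemma cN1_eq_zero_of_add_eq_ones (hn : Odd n) {α β : Fin n → ZMod 2}
    (h : α + β = fun _ => 1) : cN1 k α β = 0 := by
  have hpar : par α + par β = 1 := by rw [← par_add, h, par_ones_of_odd hn]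
  have hnot_both_odd : ¬(par α = 1 ∧ par β = 1) := by
    rintro ⟨hα, hβ⟩
    rw [hα, hβ] at hpar
    exact absurd hpar (by decide)
  simp [cN1, hnot_both_odd, dotp_eq_zero_of_add_eq_ones h]

lemma brN1_eN1 {α β : Fin n → ZMod 2} (hα : α ≠ 0) (hβ : β ≠ 0) (h : α + β ≠ 0) :
    brN1 (eN1 k α hα) (eN1 k β hβ) = Finsupp.single ⟨α + β, h⟩ (cN1 k α β) := by
  unfold brN1 eN1
  rw [Finsupp.sum_single_index, Finsupp.sum_single_index]
  · simp [dif_pos h]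
  · split <;> simp
  · rw [Finsupp.sum_single_index] <;> split <;> simp

lemma exists_brN1_eq_eN1 {γ : Fin n → ZMod 2} (h0 : γ ≠ 0) (h1 : γ ≠ fun _ => 1) :
    ∃ x y : {v : Fin n → ZMod 2 // v ≠ 0} →₀ k, eN1 k γ h0 = brN1 x y := by
  obtain ⟨α, β, rfl, hdot⟩ := exists_add_eq_dotp_eq_one h0 h1
  obtain ⟨hα, hβ⟩ := ne_zero_of_dotp_eq_one hdot
  refine ⟨eN1 k α hα, eN1 k β hβ, ?_⟩
  rw [brN1_eN1, cN1_eq_one_of_dotp_eq_one hdot]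
  rfl

lemma brN1_mem_supported (hn : Odd n) (x y : {v : Fin n → ZMod 2 // v ≠ 0} →₀ k) :
    brN1 x y ∈ Finsupp.supported k k {p | p.1 ≠ fun _ => 1} := by
  refine Submodule.finsuppSum_mem _ _ _ _ fun α _ => Submodule.finsuppSum_mem _ _ _ _ fun β _ => ?_
  split_ifs with h
  · by_cases hhat : α.1 + β.1 = fun _ => 1
    · simp [cN1_eq_zero_of_add_eq_ones hn hhat]
    · exact Finsupp.single_mem_supported k _ hhat
  · exact zero_mem _

lemma span_eN1_eq_supported :
    Submodule.span k {z : {v : Fin n → ZMod 2 // v ≠ 0} →₀ k |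
        ∃ (α : Fin n → ZMod 2) (hα : α ≠ 0), α ≠ (fun _ => 1) ∧ z = eN1 k α hα} =
      Finsupp.supported k k {p | p.1 ≠ fun _ => 1} := by
  rw [Finsupp.supported_eq_span_single]
  congr 1
  ext z
  simp [eN1, eq_comm]

lemma span_brN1_eq_supported (hn : Odd n) :
    Submodule.span k {z : {v : Fin n → ZMod 2 // v ≠ 0} →₀ k | ∃ x y, z = brN1 x y} =
      Finsupp.supported k k {p | p.1 ≠ fun _ => 1} := by
  refine le_antisymm (Submodule.span_le.2 ?_) ?_
  · rintro _ ⟨x, y, rfl⟩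
    exact brN1_mem_supported hn x y
  · rw [← span_eN1_eq_supported]
    refine Submodule.span_mono ?_
    rintro _ ⟨α, hα, hne, rfl⟩
    exact exists_brN1_eq_eN1 hα hne

lemma finrank_supported_ne_ones (hn : Odd n) :
    Module.finrank k (Finsupp.supported k k {p : {v : Fin n → ZMod 2 // v ≠ 0} |
      p.1 ≠ fun _ => 1}) = 2 ^ n - 2 := by
  classical
  have hne := ones_ne_zero_of_odd hn
  have hone : Fintype.card {p : {v : Fin n → ZMod 2 // v ≠ 0} // p.1 = fun _ => 1} = 1 :=
    Fintype.card_eq_one_iff.2 ⟨⟨⟨_, hne⟩, rfl⟩, fun p => Subtype.ext (Subtype.ext p.2)⟩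
  rw [(Finsupp.supportedEquivFinsupp _).finrank_eq, Module.finrank_finsupp_self]
  simp only [Set.coe_ofPred, Fintype.card_subtype_compl, hone, Fintype.card_unique,
    Fintype.card_pi, ZMod.card, Finset.prod_const, Finset.card_univ, Fintype.card_fin]
  omega

lemma supported_ne_ones_ne_top (hn : Odd n) :
    Finsupp.supported k k {p : {v : Fin n → ZMod 2 // v ≠ 0} | p.1 ≠ fun _ => 1} ≠ ⊤ := by
  have hne := ones_ne_zero_of_odd hn
  intro htop
  have hmem : Finsupp.single (⟨_, hne⟩ : {v : Fin n → ZMod 2 // v ≠ 0}) (1 : k) ∈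
      Finsupp.supported k k {p | p.1 ≠ fun _ => 1} := htop ▸ Submodule.mem_top
  simpa using (Finsupp.mem_supported' k _).1 hmem ⟨_, hne⟩

end Bracket

theorem N1_derived_odd_general {m n : ℕ} (hn : n = 2 * m + 1)
    {k : Type*} [Field k] :
    Submodule.span k {z : {v : Fin n → ZMod 2 // v ≠ 0} →₀ k |
        ∃ x y : {v : Fin n → ZMod 2 // v ≠ 0} →₀ k, z = brN1 x y} =
      Submodule.span k {z : {v : Fin n → ZMod 2 // v ≠ 0} →₀ k |
        ∃ (α : Fin n → ZMod 2) (hα : α ≠ 0), α ≠ (fun _ => 1) ∧ z = eN1 k α hα} ∧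
    Module.finrank k
      ↥(Submodule.span k {z : {v : Fin n → ZMod 2 // v ≠ 0} →₀ k |
          ∃ x y : {v : Fin n → ZMod 2 // v ≠ 0} →₀ k, z = brN1 x y}) = 2 ^ n - 2 ∧
    Submodule.span k {z : {v : Fin n → ZMod 2 // v ≠ 0} →₀ k |
        ∃ x y : {v : Fin n → ZMod 2 // v ≠ 0} →₀ k, z = brN1 x y} ≠ ⊤ := by
  have hodd : Odd n := hn ▸ odd_two_mul_add_one m
  rw [span_brN1_eq_supported hodd, span_eN1_eq_supported]
  exact ⟨rfl, finrank_supported_ne_ones hodd, supported_ne_ones_ne_top hodd⟩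

/-- For `n = 2m + 1` odd with `m ≥ 2`, the derived subalgebra
`[L, L]` of `L = N₁(n,k)` is spanned by `{e_α : α ≠ α̂}` where `α̂` is the all-ones
vector; in particular it has dimension `2^n - 2` and `L` is not perfect. -/
theorem N1_derived_odd {m n : ℕ} (hm : 2 ≤ m) (hn : n = 2 * m + 1)
    {k : Type*} [Field k] (hchar : CharP k 2) :
    Submodule.span k {z : {v : Fin n → ZMod 2 // v ≠ 0} →₀ k |
        ∃ x y : {v : Fin n → ZMod 2 // v ≠ 0} →₀ k, z = brN1 x y} =
      Submodule.span k {z : {v : Fin n → ZMod 2 // v ≠ 0} →₀ k |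
        ∃ (α : Fin n → ZMod 2) (hα : α ≠ 0), α ≠ (fun _ => 1) ∧ z = eN1 k α hα} ∧
    Module.finrank k
      ↥(Submodule.span k {z : {v : Fin n → ZMod 2 // v ≠ 0} →₀ k |
          ∃ x y : {v : Fin n → ZMod 2 // v ≠ 0} →₀ k, z = brN1 x y}) = 2 ^ n - 2 ∧
    Submodule.span k {z : {v : Fin n → ZMod 2 // v ≠ 0} →₀ k |
        ∃ x y : {v : Fin n → ZMod 2 // v ≠ 0} →₀ k, z = brN1 x y} ≠ ⊤ :=
  N1_derived_odd_general hn
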